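/- arXiv:2211.13937 — 2 statements merged into one kernel-verified Lean document; each statement's English description precedes it below -/
import Mathlib

section
/- The optimal value function V* satisfies S* V* = S^{π*} V* = V*, where S* V = max_π S^π V (componentwise maximum over policies) and π* is an optimal policy of the original MDP. -/
open Matrix

/-- Supremum norm on vectors. -/
noncomputable def vnorm {d : ℕ} (v : Fin d → ℝ) : ℝ := ⨆ i, |v i|

/-- Maximum absolute row sum: the operator norm induced by the supremum norm. -/
noncomputable def mnorm {d : ℕ} (M : Matrix (Fin d) (Fin d) ℝ) : ℝ :=
  ⨆ i, ∑ j, |M i j|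

/-- Transition matrix of a deterministic policy. -/
def Pmat {d m : ℕ} (P : Fin d → Fin m → Fin d → ℝ) (pol : Fin d → Fin m) :
    Matrix (Fin d) (Fin d) ℝ :=
  fun x y => P x (pol x) y

/-- Reward vector of a deterministic policy. -/
def rvec {d m : ℕ} (r : Fin d → Fin m → ℝ) (pol : Fin d → Fin m) : Fin d → ℝ :=
  fun x => r x (pol x)

/-- The Varga operator `S^π V = (I - γ P̂^π)⁻¹ (r^π + γ (P^π - P̂^π) V)`. -/
noncomputable def varga {d : ℕ} (γ : ℝ) (Ppol Phatpol : Matrix (Fin d) (Fin d) ℝ)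
    (rpol V : Fin d → ℝ) : Fin d → ℝ :=
  ((1 - γ • Phatpol)⁻¹).mulVec (rpol + γ • ((Ppol - Phatpol).mulVec V))

/-- The Varga optimality operator `S* V = max_π S^π V` (componentwise over policies). -/
noncomputable def Sstar {d m : ℕ} (γ : ℝ) (P Phat : Fin d → Fin m → Fin d → ℝ)
    (r : Fin d → Fin m → ℝ) (V : Fin d → ℝ) : Fin d → ℝ :=
  fun x => ⨆ pol : Fin d → Fin m, varga γ (Pmat P pol) (Pmat Phat pol) (rvec r pol) V x

/-!
Write `T^π V = r^π + γ P^π V` for the true Bellman operator of a policy. Then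
`S^π V - V = (I - γ P̂^π)⁻¹ (T^π V - V)`, because the model error `γ (P^π - P̂^π) V` cancels
against `(I - γ P̂^π) V`. As `(I - γ P̂^π)⁻¹ = ∑ₖ γᵏ (P̂^π)ᵏ` is entrywise nonnegative,
`T^π V ≤ V` implies `S^π V ≤ V`. Bellman optimality gives `T^π V* ≤ V*` for every `π`, with
equality at `π*`; hence `S^π V* ≤ V* = S^{π*} V*`, and the maximum over policies is attained
at `π*`.
-/

namespace Matrix

variable {n : Type*} [Fintype n]

section LinftyOpNorm

variable [DecidableEq n]

attribute [local instance] Matrix.linftyOpNormedRing Matrix.linftyOpNormedAlgebra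

lemma linfty_opNorm_le_one_of_mem_rowStochastic {M : Matrix n n ℝ}
    (hM : M ∈ rowStochastic ℝ n) : ‖M‖ ≤ 1 := by
  rw [linfty_opNorm_def, NNReal.coe_le_one]
  refine Finset.sup_le fun i _ => ?_
  rw [← NNReal.coe_le_coe, NNReal.coe_sum, NNReal.coe_one]
  simp only [coe_nnnorm, Real.norm_of_nonneg (nonneg_of_mem_rowStochastic hM),
    sum_row_of_mem_rowStochastic hM i, le_refl]

lemma linfty_opNorm_smul_lt_one_of_mem_rowStochastic {M : Matrix n n ℝ}
    (hM : M ∈ rowStochastic ℝ n) {γ : ℝ} (hγ : |γ| < 1) : ‖γ • M‖ < 1 :=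
  calc ‖γ • M‖ = |γ| * ‖M‖ := by rw [norm_smul, Real.norm_eq_abs]
    _ ≤ |γ| :=
      mul_le_of_le_one_right (abs_nonneg γ) (linfty_opNorm_le_one_of_mem_rowStochastic hM)
    _ < 1 := hγ

lemma isUnit_one_sub_smul_of_mem_rowStochastic {M : Matrix n n ℝ}
    (hM : M ∈ rowStochastic ℝ n) {γ : ℝ} (hγ : |γ| < 1) : IsUnit (1 - γ • M) :=
  isUnit_one_sub_of_norm_lt_one (linfty_opNorm_smul_lt_one_of_mem_rowStochastic hM hγ)

lemma inv_one_sub_smul_apply_nonneg_of_mem_rowStochastic {M : Matrix n n ℝ}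
    (hM : M ∈ rowStochastic ℝ n) {γ : ℝ} (hγ0 : 0 ≤ γ) (hγ1 : γ < 1) (i j : n) :
    0 ≤ (1 - γ • M)⁻¹ i j := by
  have hnorm := linfty_opNorm_smul_lt_one_of_mem_rowStochastic hM (abs_lt.2 ⟨by linarith, hγ1⟩)
  have hsum := (hasSum_geom_series_inverse _ hnorm).map (entryLinearMap ℝ ℝ i j)
    (entryLinearMap ℝ ℝ i j).continuous_of_finiteDimensional
  rw [nonsing_inv_eq_ringInverse]
  refine hsum.nonneg fun k => ?_
  simp only [Function.comp_apply, entryLinearMap_apply]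
  rw [smul_pow, smul_apply, smul_eq_mul]
  exact mul_nonneg (pow_nonneg hγ0 k) (nonneg_of_mem_rowStochastic (pow_mem hM k))

end LinftyOpNorm

lemma mulVec_nonneg {l R : Type*} [Semiring R] [PartialOrder R] [IsOrderedRing R]
    {N : Matrix l n R} (hN : ∀ i j, 0 ≤ N i j) {w : n → R} (hw : 0 ≤ w) :
    0 ≤ N *ᵥ w :=
  fun i => dotProduct_nonneg_of_nonneg (hN i) hw

end Matrix

lemma Pmat_mem_rowStochastic {d m : ℕ} {P : Fin d → Fin m → Fin d → ℝ}
    (hP : ∀ x a, (∀ y, 0 ≤ P x a y) ∧ ∑ y, P x a y = 1) (pol : Fin d → Fin m) :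
    Pmat P pol ∈ rowStochastic ℝ (Fin d) :=
  mem_rowStochastic_iff_sum.2 ⟨fun x => (hP x (pol x)).1, fun x => (hP x (pol x)).2⟩

def policyBellman {d : ℕ} (γ : ℝ) (Ppol : Matrix (Fin d) (Fin d) ℝ) (rpol V : Fin d → ℝ) :
    Fin d → ℝ :=
  rpol + γ • Ppol *ᵥ V

lemma policyBellman_Pmat_apply {d m : ℕ} (γ : ℝ) (P : Fin d → Fin m → Fin d → ℝ)
    (r : Fin d → Fin m → ℝ) (pol : Fin d → Fin m) (V : Fin d → ℝ) (x : Fin d) :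
    policyBellman γ (Pmat P pol) (rvec r pol) V x = r x (pol x) + γ * ∑ y, P x (pol x) y * V y :=
  rfl

section Varga

variable {d : ℕ} {γ : ℝ} {Ppol Phatpol : Matrix (Fin d) (Fin d) ℝ} {rpol V : Fin d → ℝ}

lemma varga_sub_self (h : IsUnit (1 - γ • Phatpol).det) :
    varga γ Ppol Phatpol rpol V - V =
      (1 - γ • Phatpol)⁻¹ *ᵥ (policyBellman γ Ppol rpol V - V) := by
  calc varga γ Ppol Phatpol rpol V - V
      = (1 - γ • Phatpol)⁻¹ *ᵥ (rpol + γ • (Ppol - Phatpol) *ᵥ V) -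
          (1 - γ • Phatpol)⁻¹ *ᵥ ((1 - γ • Phatpol) *ᵥ V) := by
        rw [varga, mulVec_mulVec, nonsing_inv_mul _ h, one_mulVec]
    _ = (1 - γ • Phatpol)⁻¹ *ᵥ (policyBellman γ Ppol rpol V - V) := by
        rw [← mulVec_sub, policyBellman]
        congr 1
        simp only [sub_mulVec, smul_mulVec, one_mulVec, smul_sub]
        abel

lemma varga_eq_self_of_policyBellman_eq (h : IsUnit (1 - γ • Phatpol).det)
    (hV : policyBellman γ Ppol rpol V = V) : varga γ Ppol Phatpol rpol V = V := by
  rw [← sub_eq_zero, varga_sub_self h, hV, sub_self, mulVec_zero]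

lemma varga_le_self_of_policyBellman_le (h : IsUnit (1 - γ • Phatpol).det)
    (hinv : ∀ i j, 0 ≤ (1 - γ • Phatpol)⁻¹ i j) (hV : policyBellman γ Ppol rpol V ≤ V) :
    varga γ Ppol Phatpol rpol V ≤ V := by
  rw [← sub_nonpos, varga_sub_self h, ← neg_sub V, mulVec_neg, neg_nonpos]
  exact mulVec_nonneg hinv (sub_nonneg.2 hV)

end Varga

lemma Sstar_eq_of_forall_varga_le {d m : ℕ} {γ : ℝ} {P Phat : Fin d → Fin m → Fin d → ℝ}
    {r : Fin d → Fin m → ℝ} {V W : Fin d → ℝ} (π : Fin d → Fin m)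
    (hle : ∀ pol, varga γ (Pmat P pol) (Pmat Phat pol) (rvec r pol) V ≤ W)
    (hπ : varga γ (Pmat P π) (Pmat Phat π) (rvec r π) V = W) :
    Sstar γ P Phat r V = W := by
  have : Nonempty (Fin d → Fin m) := ⟨π⟩
  funext x
  refine le_antisymm (ciSup_le fun pol => hle pol x) ?_
  exact hπ ▸ le_ciSup (f := fun pol => varga γ (Pmat P pol) (Pmat Phat pol) (rvec r pol) V x)
    (Finite.bddAbove_range _) π

theorem Sstar_fixed_point_general {d m : ℕ}
    (γ : ℝ) (hγ0 : 0 ≤ γ) (hγ1 : γ < 1)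
    (P Phat : Fin d → Fin m → Fin d → ℝ) (r : Fin d → Fin m → ℝ)
    (hPhat : ∀ x a, (∀ y, 0 ≤ Phat x a y) ∧ ∑ y, Phat x a y = 1)
    (Vstar : Fin d → ℝ) (πstar : Fin d → Fin m)
    (hbell : ∀ x, Vstar x = ⨆ a, (r x a + γ * ∑ y, P x a y * Vstar y))
    (hopt : ∀ x, Vstar x = r x (πstar x) + γ * ∑ y, P x (πstar x) y * Vstar y) :
    Sstar γ P Phat r Vstar =
        varga γ (Pmat P πstar) (Pmat Phat πstar) (rvec r πstar) Vstar ∧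
      varga γ (Pmat P πstar) (Pmat Phat πstar) (rvec r πstar) Vstar = Vstar := by
  have hstoch := Pmat_mem_rowStochastic hPhat
  have hdet (pol : Fin d → Fin m) : IsUnit (1 - γ • Pmat Phat pol).det :=
    (isUnit_iff_isUnit_det _).mp <|
      isUnit_one_sub_smul_of_mem_rowStochastic (hstoch pol) (abs_lt.2 ⟨by linarith, hγ1⟩)
  have hfix : varga γ (Pmat P πstar) (Pmat Phat πstar) (rvec r πstar) Vstar = Vstar :=
    varga_eq_self_of_policyBellman_eq (hdet πstar) (funext fun x => (hopt x).symm)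
  have hle (pol : Fin d → Fin m) :
      varga γ (Pmat P pol) (Pmat Phat pol) (rvec r pol) Vstar ≤ Vstar := by
    refine varga_le_self_of_policyBellman_le (hdet pol)
      (inv_one_sub_smul_apply_nonneg_of_mem_rowStochastic (hstoch pol) hγ0 hγ1) fun x => ?_
    rw [policyBellman_Pmat_apply, hbell x]
    exact le_ciSup (f := fun a => r x a + γ * ∑ y, P x a y * Vstar y) (Finite.bddAbove_range _)
      (pol x)
  exact ⟨(Sstar_eq_of_forall_varga_le πstar hle hfix).trans hfix.symm, hfix⟩

/-- `S* V* = S^{π*} V* = V*` for the optimal value function `V*` and optimal policy `π*`. -/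
theorem Sstar_fixed_point {d m : ℕ} (hm : 0 < m)
    (γ : ℝ) (hγ0 : 0 ≤ γ) (hγ1 : γ < 1)
    (P Phat : Fin d → Fin m → Fin d → ℝ) (r : Fin d → Fin m → ℝ)
    (hP : ∀ x a, (∀ y, 0 ≤ P x a y) ∧ ∑ y, P x a y = 1)
    (hPhat : ∀ x a, (∀ y, 0 ≤ Phat x a y) ∧ ∑ y, Phat x a y = 1)
    (Vstar : Fin d → ℝ) (πstar : Fin d → Fin m)
    (hbell : ∀ x, Vstar x = ⨆ a, (r x a + γ * ∑ y, P x a y * Vstar y))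
    (hopt : ∀ x, Vstar x = r x (πstar x) + γ * ∑ y, P x (πstar x) y * Vstar y) :
    Sstar γ P Phat r Vstar =
        varga γ (Pmat P πstar) (Pmat Phat πstar) (rvec r πstar) Vstar ∧
      varga γ (Pmat P πstar) (Pmat Phat πstar) (rvec r πstar) Vstar = Vstar :=
  Sstar_fixed_point_general γ hγ0 hγ1 P Phat r hPhat Vstar πstar hbell hopt
end

section
/- (Full OS-VI control error propagation, sup norm) Suppose V_k = S* V_{k-1} + ε_k with ‖ε_k‖_∞ ≤ ε for all k ≥ 1, and S^{π_k} V_{k-1} = S* V_{k-1} + ε^policy_k. Let γ' = (γ/(1-γ)) max_{π ∈ Π_k} ‖P^π - P̂^π‖_∞ < 1, where Π_k contains π*, π_k, and all intermediate S-improved policies. Then ‖V^{π_k} - V*‖_∞ ≤ (2γ'^k/(1-γ')) ‖V_0 - V*‖_∞ + (2γ'(1-γ'^{k-1})/(1-γ')²) ε + (1/(1-γ')) ‖ε^policy_k‖_∞. -/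
open Matrix

/-!
Each `S^π` is a `γ/(1-γ) ‖P^π - P̂^π‖`-contraction in the sup norm; `S^{π*}` fixes `V*`, and the
Bellman inequality together with a maximum principle for `(I - γ P̂^π)` gives `S^π V* ≤ V*`.
Hence a step that is greedy for `S*` up to an error `ε'` satisfies
`‖S^π W - V*‖ ≤ γ' ‖W - V*‖ + ‖ε'‖`. Iterating this bounds `‖V_{k-1} - V*‖` geometrically;
finally `V^{π_k}` is the fixed point of `S^{π_k}`, so
`‖V^{π_k} - V*‖ ≤ γ' (‖V^{π_k} - V*‖ + ‖V_{k-1} - V*‖) + γ' ‖V_{k-1} - V*‖ + ‖ε^policy_k‖`,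
which is solved for `‖V^{π_k} - V*‖`.
-/

attribute [local instance] Matrix.linftyOpNormedAddCommGroup Matrix.linftyOpNormedRing
  Matrix.linftyOpNormedAlgebra

lemma vnorm_eq_norm {d : ℕ} (v : Fin d → ℝ) : vnorm v = ‖v‖ := by
  rw [vnorm, Pi.norm_def, Finset.sup_univ_eq_ciSup, NNReal.coe_iSup]
  simp only [coe_nnnorm, Real.norm_eq_abs]

lemma mnorm_eq_norm {d : ℕ} (M : Matrix (Fin d) (Fin d) ℝ) : mnorm M = ‖M‖ := by
  rw [mnorm, linfty_opNorm_def, Finset.sup_univ_eq_ciSup, NNReal.coe_iSup]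
  simp only [NNReal.coe_sum, coe_nnnorm, Real.norm_eq_abs]

lemma apply_le_norm {ι : Type*} [Fintype ι] (v : ι → ℝ) (i : ι) : v i ≤ ‖v‖ :=
  (le_abs_self _).trans (norm_le_pi_norm v i)

section RowStochastic

variable {n : Type*} [Fintype n] [DecidableEq n] {Q : Matrix n n ℝ} {γ : ℝ}

lemma norm_le_one_of_mem_rowStochastic (hQ : Q ∈ rowStochastic ℝ n) : ‖Q‖ ≤ 1 := by
  rw [linfty_opNorm_def, NNReal.coe_le_one, Finset.sup_le_iff]
  intro i _
  rw [← NNReal.coe_le_one, NNReal.coe_sum]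
  simp only [coe_nnnorm, Real.norm_of_nonneg (nonneg_of_mem_rowStochastic hQ),
    sum_row_of_mem_rowStochastic hQ i, le_rfl]

lemma mulVec_apply_le_of_mem_rowStochastic (hQ : Q ∈ rowStochastic ℝ n) {w : n → ℝ} {c : ℝ}
    (hw : ∀ j, w j ≤ c) (i : n) : (Q *ᵥ w) i ≤ c :=
  calc (Q *ᵥ w) i = ∑ j, Q i j * w j := rfl
    _ ≤ ∑ j, Q i j * c :=
      Finset.sum_le_sum fun j _ => mul_le_mul_of_nonneg_left (hw j) (nonneg_of_mem_rowStochastic hQ)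
    _ = c := by rw [← Finset.sum_mul, sum_row_of_mem_rowStochastic hQ i, one_mul]

/-- Maximum principle: look at a coordinate where `w` is largest. -/
lemma nonpos_of_le_smul_mulVec (hγ0 : 0 ≤ γ) (hγ1 : γ < 1) (hQ : Q ∈ rowStochastic ℝ n)
    {w : n → ℝ} (hw : w ≤ γ • (Q *ᵥ w)) : w ≤ 0 := by
  intro i
  have : Nonempty n := ⟨i⟩
  obtain ⟨j, hj⟩ := Finite.exists_max w
  have hmax : w j ≤ γ * w j :=
    (hw j).trans (mul_le_mul_of_nonneg_left (mulVec_apply_le_of_mem_rowStochastic hQ hj j) hγ0)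
  show w i ≤ 0
  nlinarith [hj i]

lemma isUnit_one_sub_smul (hγ0 : 0 ≤ γ) (hγ1 : γ < 1) (hQ : ‖Q‖ ≤ 1) : IsUnit (1 - γ • Q) := by
  refine (Units.oneSub (γ • Q) ?_).isUnit
  calc ‖γ • Q‖ ≤ ‖γ‖ * ‖Q‖ := norm_smul_le γ Q
    _ ≤ γ * 1 := by rw [Real.norm_of_nonneg hγ0]; gcongr
    _ < 1 := by linarith

lemma inv_one_sub_smul_mulVec_eq_iff (hQ : IsUnit (1 - γ • Q)) {b u : n → ℝ} :
    (1 - γ • Q)⁻¹ *ᵥ b = u ↔ u = b + γ • (Q *ᵥ u) := by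
  have := hQ.invertible
  have hmul : (1 - γ • Q) *ᵥ u = u - γ • (Q *ᵥ u) := by
    rw [sub_mulVec, one_mulVec, smul_mulVec]
  rw [← sub_eq_iff_eq_add, ← hmul]
  exact ⟨fun h => by rw [← h, mulVec_mulVec, mul_inv_of_invertible, one_mulVec],
    fun h => inv_mulVec_eq_vec h.symm⟩

end RowStochastic

section Varga

variable {d : ℕ} {γ : ℝ} {Pp Ph : Matrix (Fin d) (Fin d) ℝ} {rp : Fin d → ℝ}

lemma varga_eq_iff (hPh : IsUnit (1 - γ • Ph)) {V u : Fin d → ℝ} :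
    varga γ Pp Ph rp V = u ↔ u = rp + γ • ((Pp - Ph) *ᵥ V) + γ • (Ph *ᵥ u) :=
  inv_one_sub_smul_mulVec_eq_iff hPh

lemma varga_eq_self (hPh : IsUnit (1 - γ • Ph)) {V : Fin d → ℝ} (hV : V = rp + γ • (Pp *ᵥ V)) :
    varga γ Pp Ph rp V = V := by
  rw [varga_eq_iff hPh, sub_mulVec, smul_sub, add_assoc, sub_add_cancel]
  exact hV

lemma norm_varga_sub_le (hγ0 : 0 ≤ γ) (hγ1 : γ < 1) (hPh : ‖Ph‖ ≤ 1) (V W : Fin d → ℝ) :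
    ‖varga γ Pp Ph rp V - varga γ Pp Ph rp W‖ ≤ γ / (1 - γ) * ‖Pp - Ph‖ * ‖V - W‖ := by
  have hunit := isUnit_one_sub_smul hγ0 hγ1 hPh
  set u := varga γ Pp Ph rp V
  set u' := varga γ Pp Ph rp W
  have hu := (varga_eq_iff hunit).1 (rfl : u = u)
  have hu' := (varga_eq_iff hunit).1 (rfl : u' = u')
  have key : u - u' = γ • ((Pp - Ph) *ᵥ (V - W)) + γ • (Ph *ᵥ (u - u')) := by
    conv_lhs => rw [hu, hu']
    rw [mulVec_sub, mulVec_sub, smul_sub, smul_sub]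
    abel
  have hbound : ‖u - u'‖ ≤ γ * (‖Pp - Ph‖ * ‖V - W‖) + γ * ‖u - u'‖ :=
    calc ‖u - u'‖ ≤ ‖γ • ((Pp - Ph) *ᵥ (V - W))‖ + ‖γ • (Ph *ᵥ (u - u'))‖ :=
          (congrArg norm key).trans_le (norm_add_le _ _)
      _ ≤ γ * (‖Pp - Ph‖ * ‖V - W‖) + γ * (‖Ph‖ * ‖u - u'‖) := by
          rw [norm_smul, norm_smul, Real.norm_of_nonneg hγ0]
          gcongr <;> exact linfty_opNorm_mulVec _ _
      _ ≤ γ * (‖Pp - Ph‖ * ‖V - W‖) + γ * ‖u - u'‖ := by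
          gcongr
          exact mul_le_of_le_one_left (norm_nonneg _) hPh
  rw [div_mul_eq_mul_div, div_mul_eq_mul_div, le_div_iff₀ (by linarith)]
  linarith

lemma varga_le_self (hγ0 : 0 ≤ γ) (hγ1 : γ < 1) (hPh : Ph ∈ rowStochastic ℝ (Fin d))
    {V : Fin d → ℝ} (hV : rp + γ • (Pp *ᵥ V) ≤ V) : varga γ Pp Ph rp V ≤ V := by
  set u := varga γ Pp Ph rp V
  have hu := (varga_eq_iff (isUnit_one_sub_smul hγ0 hγ1
    (norm_le_one_of_mem_rowStochastic hPh))).1 (rfl : u = u)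
  have key : u - V = (rp + γ • (Pp *ᵥ V) - V) + γ • (Ph *ᵥ (u - V)) := by
    conv_lhs => rw [hu]
    rw [sub_mulVec, mulVec_sub, smul_sub, smul_sub]
    abel
  refine sub_nonpos.1 (nonpos_of_le_smul_mulVec hγ0 hγ1 hPh ?_)
  exact key.trans_le (add_le_of_nonpos_left (sub_nonpos.2 hV))

end Varga

lemma le_pow_mul_add_geom_sum_mul {a : ℕ → ℝ} {c e : ℝ} (hc : 0 ≤ c) {n : ℕ}
    (h : ∀ i < n, a (i + 1) ≤ c * a i + e) :
    a n ≤ c ^ n * a 0 + (∑ i ∈ Finset.range n, c ^ i) * e := by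
  induction n with
  | zero => simp
  | succ n ih =>
    calc a (n + 1) ≤ c * a n + e := h n n.lt_succ_self
      _ ≤ c * (c ^ n * a 0 + (∑ i ∈ Finset.range n, c ^ i) * e) + e := by
        gcongr
        exact ih fun i hi => h i (hi.trans n.lt_succ_self)
      _ = c ^ (n + 1) * a 0 + (∑ i ∈ Finset.range (n + 1), c ^ i) * e := by
        rw [geom_sum_succ]
        ring

section MDP

variable {d m : ℕ} {γ : ℝ} {P Phat : Fin d → Fin m → Fin d → ℝ} {r : Fin d → Fin m → ℝ}
  {Vstar : Fin d → ℝ}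

/-- The policy operator `S^π`. -/
noncomputable abbrev policyVarga (γ : ℝ) (P Phat : Fin d → Fin m → Fin d → ℝ)
    (r : Fin d → Fin m → ℝ) (pol : Fin d → Fin m) : (Fin d → ℝ) → Fin d → ℝ :=
  varga γ (Pmat P pol) (Pmat Phat pol) (rvec r pol)

lemma pmat_mem_rowStochastic (hP : ∀ x a, (∀ y, 0 ≤ P x a y) ∧ ∑ y, P x a y = 1)
    (pol : Fin d → Fin m) : Pmat P pol ∈ rowStochastic ℝ (Fin d) :=
  mem_rowStochastic_iff_sum.2 ⟨fun x y => (hP x (pol x)).1 y, fun x => (hP x (pol x)).2⟩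

lemma policyVarga_le_sstar (pol : Fin d → Fin m) (V : Fin d → ℝ) :
    policyVarga γ P Phat r pol V ≤ Sstar γ P Phat r V := fun x =>
  le_ciSup (f := fun pol => policyVarga γ P Phat r pol V x) (Set.finite_range _).bddAbove pol

lemma rvec_add_smul_mulVec_le_of_bellman
    (hbell : ∀ x, Vstar x = ⨆ a, (r x a + γ * ∑ y, P x a y * Vstar y)) (pol : Fin d → Fin m) :
    rvec r pol + γ • (Pmat P pol *ᵥ Vstar) ≤ Vstar := fun x => by
  rw [hbell x]
  exact le_ciSup (f := fun a => r x a + γ * ∑ y, P x a y * Vstar y)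
    (Set.finite_range _).bddAbove (pol x)

lemma norm_policyVarga_sub_le (hγ0 : 0 ≤ γ) (hγ1 : γ < 1)
    (hPhat : ∀ x a, (∀ y, 0 ≤ Phat x a y) ∧ ∑ y, Phat x a y = 1) {pol : Fin d → Fin m} {c : ℝ}
    (hc : γ / (1 - γ) * ‖Pmat P pol - Pmat Phat pol‖ ≤ c) (V W : Fin d → ℝ) :
    ‖policyVarga γ P Phat r pol V - policyVarga γ P Phat r pol W‖ ≤ c * ‖V - W‖ :=
  (norm_varga_sub_le hγ0 hγ1
    (norm_le_one_of_mem_rowStochastic (pmat_mem_rowStochastic hPhat pol)) V W).trans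
    (mul_le_mul_of_nonneg_right hc (norm_nonneg _))

/-- Below `V*`, compare with `S^{π*} V* = V*`; above, with `S^π V* ≤ V*`. -/
lemma norm_policyVarga_sub_le_of_bellman (hγ0 : 0 ≤ γ) (hγ1 : γ < 1)
    (hPhat : ∀ x a, (∀ y, 0 ≤ Phat x a y) ∧ ∑ y, Phat x a y = 1) {πstar : Fin d → Fin m}
    (hbell : ∀ pol, rvec r pol + γ • (Pmat P pol *ᵥ Vstar) ≤ Vstar)
    (hopt : Vstar = rvec r πstar + γ • (Pmat P πstar *ᵥ Vstar))
    {pol : Fin d → Fin m} {W εq : Fin d → ℝ}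
    (hpol : policyVarga γ P Phat r pol W = Sstar γ P Phat r W + εq) {c : ℝ}
    (hc : γ / (1 - γ) * ‖Pmat P pol - Pmat Phat pol‖ ≤ c)
    (hcstar : γ / (1 - γ) * ‖Pmat P πstar - Pmat Phat πstar‖ ≤ c) :
    ‖policyVarga γ P Phat r pol W - Vstar‖ ≤ c * ‖W - Vstar‖ + ‖εq‖ := by
  have hc0 : 0 ≤ c := (mul_nonneg (div_nonneg hγ0 (by linarith)) (norm_nonneg _)).trans hcstar
  have hfix : policyVarga γ P Phat r πstar Vstar = Vstar :=
    varga_eq_self (isUnit_one_sub_smul hγ0 hγ1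
      (norm_le_one_of_mem_rowStochastic (pmat_mem_rowStochastic hPhat πstar))) hopt
  have hsub : policyVarga γ P Phat r pol Vstar ≤ Vstar :=
    varga_le_self hγ0 hγ1 (pmat_mem_rowStochastic hPhat pol) (hbell pol)
  refine (pi_norm_le_iff_of_nonneg (by positivity)).2 fun x => ?_
  rw [Real.norm_eq_abs, abs_le, Pi.sub_apply]
  have hεq : -εq x ≤ ‖εq‖ := (neg_le_abs _).trans (norm_le_pi_norm εq x)
  constructor
  · have hstar := (apply_le_norm (policyVarga γ P Phat r πstar Vstar -
      policyVarga γ P Phat r πstar W) x).trans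
      (norm_policyVarga_sub_le hγ0 hγ1 hPhat hcstar Vstar W)
    rw [Pi.sub_apply, hfix, norm_sub_rev] at hstar
    have hmax : policyVarga γ P Phat r πstar W x ≤ Sstar γ P Phat r W x :=
      policyVarga_le_sstar πstar W x
    have hpolx := congrFun hpol x
    rw [Pi.add_apply] at hpolx
    linarith
  · have hself := (apply_le_norm (policyVarga γ P Phat r pol W -
      policyVarga γ P Phat r pol Vstar) x).trans
      (norm_policyVarga_sub_le hγ0 hγ1 hPhat hc W Vstar)
    rw [Pi.sub_apply] at hself
    linarith [hsub x, norm_nonneg εq]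

lemma norm_sstar_add_sub_le_of_bellman (hγ0 : 0 ≤ γ) (hγ1 : γ < 1)
    (hPhat : ∀ x a, (∀ y, 0 ≤ Phat x a y) ∧ ∑ y, Phat x a y = 1) {πstar : Fin d → Fin m}
    (hbell : ∀ pol, rvec r pol + γ • (Pmat P pol *ᵥ Vstar) ≤ Vstar)
    (hopt : Vstar = rvec r πstar + γ • (Pmat P πstar *ᵥ Vstar))
    {pol : Fin d → Fin m} {W W' ε' : Fin d → ℝ} (hW' : W' = Sstar γ P Phat r W + ε')
    (hpol : policyVarga γ P Phat r pol W = Sstar γ P Phat r W) {c : ℝ}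
    (hc : γ / (1 - γ) * ‖Pmat P pol - Pmat Phat pol‖ ≤ c)
    (hcstar : γ / (1 - γ) * ‖Pmat P πstar - Pmat Phat πstar‖ ≤ c) :
    ‖W' - Vstar‖ ≤ c * ‖W - Vstar‖ + ‖ε'‖ := by
  have hgreedy := norm_policyVarga_sub_le_of_bellman hγ0 hγ1 hPhat hbell hopt
    (hpol.trans (add_zero _).symm) hc hcstar
  rw [hpol, norm_zero, add_zero] at hgreedy
  calc ‖W' - Vstar‖ = ‖(Sstar γ P Phat r W - Vstar) + ε'‖ := by rw [hW', sub_add_eq_add_sub]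
    _ ≤ ‖Sstar γ P Phat r W - Vstar‖ + ‖ε'‖ := norm_add_le _ _
    _ ≤ c * ‖W - Vstar‖ + ‖ε'‖ := by gcongr

lemma norm_policyValue_sub_le_of_bellman (hγ0 : 0 ≤ γ) (hγ1 : γ < 1)
    (hP : ∀ x a, (∀ y, 0 ≤ P x a y) ∧ ∑ y, P x a y = 1)
    (hPhat : ∀ x a, (∀ y, 0 ≤ Phat x a y) ∧ ∑ y, Phat x a y = 1) {πstar : Fin d → Fin m}
    (hbell : ∀ pol, rvec r pol + γ • (Pmat P pol *ᵥ Vstar) ≤ Vstar)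
    (hopt : Vstar = rvec r πstar + γ • (Pmat P πstar *ᵥ Vstar))
    {pol : Fin d → Fin m} {W εq : Fin d → ℝ}
    (hpol : policyVarga γ P Phat r pol W = Sstar γ P Phat r W + εq) {c : ℝ}
    (hc : γ / (1 - γ) * ‖Pmat P pol - Pmat Phat pol‖ ≤ c)
    (hcstar : γ / (1 - γ) * ‖Pmat P πstar - Pmat Phat πstar‖ ≤ c) (hc1 : c < 1) :
    ‖(1 - γ • Pmat P pol)⁻¹ *ᵥ rvec r pol - Vstar‖ ≤
      (2 * c * ‖W - Vstar‖ + ‖εq‖) / (1 - c) := by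
  set Vpol := (1 - γ • Pmat P pol)⁻¹ *ᵥ rvec r pol
  have hc0 : 0 ≤ c := (mul_nonneg (div_nonneg hγ0 (by linarith)) (norm_nonneg _)).trans hcstar
  have hfix : policyVarga γ P Phat r pol Vpol = Vpol :=
    varga_eq_self (isUnit_one_sub_smul hγ0 hγ1
        (norm_le_one_of_mem_rowStochastic (pmat_mem_rowStochastic hPhat pol)))
      ((inv_one_sub_smul_mulVec_eq_iff (isUnit_one_sub_smul hγ0 hγ1
        (norm_le_one_of_mem_rowStochastic (pmat_mem_rowStochastic hP pol)))).1 rfl)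
  have hlip := norm_policyVarga_sub_le (r := r) hγ0 hγ1 hPhat hc Vpol W
  rw [hfix] at hlip
  have hW := norm_policyVarga_sub_le_of_bellman hγ0 hγ1 hPhat hbell hopt hpol hc hcstar
  have hsplit : c * ‖Vpol - W‖ ≤ c * (‖Vpol - Vstar‖ + ‖W - Vstar‖) :=
    mul_le_mul_of_nonneg_left ((norm_sub_le_norm_sub_add_norm_sub Vpol Vstar W).trans_eq
      (by rw [norm_sub_rev Vstar W])) hc0
  have htri := norm_sub_le_norm_sub_add_norm_sub Vpol (policyVarga γ P Phat r pol W) Vstar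
  rw [le_div_iff₀ (by linarith)]
  linarith

end MDP

theorem osvi_control_error_propagation_general {d m : ℕ}
    (γ : ℝ) (hγ0 : 0 ≤ γ) (hγ1 : γ < 1)
    (P Phat : Fin d → Fin m → Fin d → ℝ) (r : Fin d → Fin m → ℝ)
    (hP : ∀ x a, (∀ y, 0 ≤ P x a y) ∧ ∑ y, P x a y = 1)
    (hPhat : ∀ x a, (∀ y, 0 ≤ Phat x a y) ∧ ∑ y, Phat x a y = 1)
    (Vstar : Fin d → ℝ) (πstar : Fin d → Fin m)
    (hbell : ∀ x, Vstar x = ⨆ a, (r x a + γ * ∑ y, P x a y * Vstar y))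
    (hopt : ∀ x, Vstar x = r x (πstar x) + γ * ∑ y, P x (πstar x) y * Vstar y)
    (k : ℕ) (hk : 1 ≤ k)
    (V : ℕ → Fin d → ℝ) (ε : ℕ → Fin d → ℝ) (e : ℝ)
    (hV : ∀ i, 1 ≤ i → i ≤ k → V i = Sstar γ P Phat r (V (i - 1)) + ε i)
    (hε : ∀ i, 1 ≤ i → i ≤ k → vnorm (ε i) ≤ e)
    (πsel : ℕ → Fin d → Fin m)
    (hsel : ∀ i, 1 ≤ i → i < k →
      varga γ (Pmat P (πsel i)) (Pmat Phat (πsel i)) (rvec r (πsel i)) (V (i - 1)) =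
        Sstar γ P Phat r (V (i - 1)))
    (πk : Fin d → Fin m) (εp : Fin d → ℝ)
    (hπk : varga γ (Pmat P πk) (Pmat Phat πk) (rvec r πk) (V (k - 1)) =
      Sstar γ P Phat r (V (k - 1)) + εp)
    (γ' : ℝ)
    (hγ'def : γ' = γ / (1 - γ) *
      (insert πstar (insert πk ((Finset.Icc 1 (k - 1)).image πsel))).sup'
        (Finset.insert_nonempty _ _)
        (fun pol => mnorm (Pmat P pol - Pmat Phat pol)))
    (hγ'lt : γ' < 1)
    (Vpik : Fin d → ℝ)
    (hVpik : Vpik = ((1 - γ • Pmat P πk)⁻¹).mulVec (rvec r πk)) :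
    vnorm (Vpik - Vstar) ≤
      2 * γ' ^ k / (1 - γ') * vnorm (V 0 - Vstar) +
        2 * γ' * (1 - γ' ^ (k - 1)) / (1 - γ') ^ 2 * e +
        1 / (1 - γ') * vnorm εp := by
  obtain ⟨j, rfl⟩ : ∃ j, k = j + 1 := ⟨k - 1, by omega⟩
  simp only [add_tsub_cancel_right, mnorm_eq_norm, vnorm_eq_norm] at hπk hγ'def hε ⊢
  have hbellman := rvec_add_smul_mulVec_le_of_bellman hbell
  have hoptimal : Vstar = rvec r πstar + γ • (Pmat P πstar *ᵥ Vstar) := funext hopt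
  have hcoef : ∀ pol ∈ insert πstar (insert πk ((Finset.Icc 1 j).image πsel)),
      γ / (1 - γ) * ‖Pmat P pol - Pmat Phat pol‖ ≤ γ' := fun pol hpol =>
    hγ'def ▸ mul_le_mul_of_nonneg_left
      (Finset.le_sup' (fun pol => ‖Pmat P pol - Pmat Phat pol‖) hpol) (div_nonneg hγ0 (by linarith))
  have hcstar := hcoef πstar (Finset.mem_insert_self _ _)
  have hγ'0 : 0 ≤ γ' := (mul_nonneg (div_nonneg hγ0 (by linarith)) (norm_nonneg _)).trans hcstar
  have hstep : ∀ i < j, ‖V (i + 1) - Vstar‖ ≤ γ' * ‖V i - Vstar‖ + e := by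
    intro i hi
    have hVi := hV (i + 1) (by omega) (by omega)
    rw [add_tsub_cancel_right] at hVi
    have hcsel := hcoef (πsel (i + 1)) <| Finset.mem_insert_of_mem <| Finset.mem_insert_of_mem <|
      Finset.mem_image_of_mem _ <| Finset.mem_Icc.2 ⟨by omega, by omega⟩
    exact (norm_sstar_add_sub_le_of_bellman hγ0 hγ1 hPhat hbellman hoptimal hVi
      (hsel (i + 1) (by omega) (by omega)) hcsel hcstar).trans
      (by gcongr; exact hε (i + 1) (by omega) (by omega))
  have hiter := le_pow_mul_add_geom_sum_mul (a := fun i => ‖V i - Vstar‖) hγ'0 hstep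
  subst hVpik
  calc _ ≤ (2 * γ' * ‖V j - Vstar‖ + ‖εp‖) / (1 - γ') :=
        norm_policyValue_sub_le_of_bellman hγ0 hγ1 hP hPhat hbellman hoptimal hπk
          (hcoef πk (by simp)) hcstar hγ'lt
    _ ≤ (2 * γ' * (γ' ^ j * ‖V 0 - Vstar‖ + (∑ i ∈ Finset.range j, γ' ^ i) * e) + ‖εp‖) /
          (1 - γ') := by gcongr
    _ = _ := by
        rw [geom_sum_eq hγ'lt.ne]
        field_simp [sub_ne_zero.2 hγ'lt.ne, sub_ne_zero.2 hγ'lt.ne']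
        ring

/-- Full OS-VI control error propagation in sup norm (Theorem 2, `⋆ = ∞`). -/
theorem osvi_control_error_propagation {d m : ℕ} (hm : 0 < m)
    (γ : ℝ) (hγ0 : 0 ≤ γ) (hγ1 : γ < 1)
    (P Phat : Fin d → Fin m → Fin d → ℝ) (r : Fin d → Fin m → ℝ)
    (hP : ∀ x a, (∀ y, 0 ≤ P x a y) ∧ ∑ y, P x a y = 1)
    (hPhat : ∀ x a, (∀ y, 0 ≤ Phat x a y) ∧ ∑ y, Phat x a y = 1)
    (Vstar : Fin d → ℝ) (πstar : Fin d → Fin m)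
    (hbell : ∀ x, Vstar x = ⨆ a, (r x a + γ * ∑ y, P x a y * Vstar y))
    (hopt : ∀ x, Vstar x = r x (πstar x) + γ * ∑ y, P x (πstar x) y * Vstar y)
    (k : ℕ) (hk : 1 ≤ k)
    (V : ℕ → Fin d → ℝ) (ε : ℕ → Fin d → ℝ) (e : ℝ)
    (hV : ∀ i, 1 ≤ i → i ≤ k → V i = Sstar γ P Phat r (V (i - 1)) + ε i)
    (hε : ∀ i, 1 ≤ i → i ≤ k → vnorm (ε i) ≤ e)
    (πsel : ℕ → Fin d → Fin m)
    (hsel : ∀ i, 1 ≤ i → i < k →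
      varga γ (Pmat P (πsel i)) (Pmat Phat (πsel i)) (rvec r (πsel i)) (V (i - 1)) =
        Sstar γ P Phat r (V (i - 1)))
    (πk : Fin d → Fin m) (εp : Fin d → ℝ)
    (hπk : varga γ (Pmat P πk) (Pmat Phat πk) (rvec r πk) (V (k - 1)) =
      Sstar γ P Phat r (V (k - 1)) + εp)
    (γ' : ℝ)
    (hγ'def : γ' = γ / (1 - γ) *
      (insert πstar (insert πk ((Finset.Icc 1 (k - 1)).image πsel))).sup'
        (Finset.insert_nonempty _ _)
        (fun pol => mnorm (Pmat P pol - Pmat Phat pol)))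
    (hγ'lt : γ' < 1)
    (Vpik : Fin d → ℝ)
    (hVpik : Vpik = ((1 - γ • Pmat P πk)⁻¹).mulVec (rvec r πk)) :
    vnorm (Vpik - Vstar) ≤
      2 * γ' ^ k / (1 - γ') * vnorm (V 0 - Vstar) +
        2 * γ' * (1 - γ' ^ (k - 1)) / (1 - γ') ^ 2 * e +
        1 / (1 - γ') * vnorm εp :=
  osvi_control_error_propagation_general γ hγ0 hγ1 P Phat r hP hPhat Vstar πstar hbell hopt k hk V ε
    e hV hε πsel hsel πk εp hπk γ' hγ'def hγ'lt Vpik hVpik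
end
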